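/- arXiv:0801.3178 — 4 statements merged into one kernel-verified Lean document; each statement's English description precedes it below -/
import Mathlib

section
/- Let G be a finite group acting linearly on a finite-dimensional vector space V over a finite field F_q, and consider the dual (contragredient) action of G on the dual space V*. Then the number of G-orbits on V equals the number of G-orbits on V*. -/
open MulAction Module

private lemma card_orbit_range {G X : Type*} [Group G] [MulAction G X] :
    Nat.card (Set.range fun x : X => MulAction.orbit G x) =
      Nat.card (MulAction.orbitRel.Quotient G X) := by
  apply Nat.card_congr
  refine Equiv.symm (Equiv.ofBijective
    (fun q => Quotient.liftOn' q
      (fun x => (⟨orbit G x, x, rfl⟩ : Set.range fun x : X => orbit G x))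
      (fun a b h => Subtype.ext ((MulAction.orbit_eq_iff).mpr h))) ⟨?_, ?_⟩)
  · intro q₁ q₂ h
    induction q₁ using Quotient.inductionOn'
    induction q₂ using Quotient.inductionOn'
    exact Quotient.sound' ((MulAction.orbit_eq_iff).mp (congrArg Subtype.val h))
  · rintro ⟨s, x, hx⟩
    exact ⟨Quotient.mk'' x, Subtype.ext hx⟩

/-- For a finite group `G` acting linearly (via a representation `ρ`) on a
finite-dimensional vector space `V` over a finite field, the number of `G`-orbits on `V`
equals the number of `G`-orbits on the dual space `V*` under the contragredient action
`(g • w) v = w (ρ g⁻¹ v)`. Orbits are counted as the number of distinct orbit sets. -/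
theorem orbits_eq_orbits_dual
    {K V G : Type*} [Field K] [Fintype K] [AddCommGroup V] [Module K V]
    [FiniteDimensional K V] [Group G] [Finite G] (ρ : Representation K G V) :
    Nat.card (Set.range fun v : V => Set.range fun g : G => ρ g v) =
      Nat.card (Set.range fun w : Module.Dual K V =>
        Set.range fun g : G => (ρ g⁻¹).dualMap w) := by
  letI : SMul G V := ⟨fun g v => ρ g v⟩
  letI : MulAction G V :=
    { one_smul := fun v => by show ρ 1 v = v; simp
      mul_smul := fun g h v => by show ρ (g * h) v = ρ g (ρ h v); simp [map_mul] }
  letI : SMul G (Module.Dual K V) := ⟨fun g w => (ρ g⁻¹).dualMap w⟩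
  letI : MulAction G (Module.Dual K V) :=
    { one_smul := fun w => by
        show (ρ (1 : G)⁻¹).dualMap w = w
        ext v; simp
      mul_smul := fun g h w => by
        show (ρ (g * h)⁻¹).dualMap w = (ρ g⁻¹).dualMap ((ρ h⁻¹).dualMap w)
        ext v; simp [mul_inv_rev, map_mul] }
  have h1 : (Set.range fun v : V => Set.range fun g : G => ρ g v) =
      Set.range fun v : V => orbit G v := rfl
  have h2 : (Set.range fun w : Module.Dual K V =>
      Set.range fun g : G => (ρ g⁻¹).dualMap w) =
      Set.range fun w : Module.Dual K V => orbit G w := rfl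
  rw [h1, h2, card_orbit_range, card_orbit_range]
  -- finiteness
  haveI : Finite V := Module.finite_of_finite K
  haveI : Finite (Module.Dual K V) := Module.finite_of_finite K
  haveI := Fintype.ofFinite V
  haveI := Fintype.ofFinite (Module.Dual K V)
  haveI := Fintype.ofFinite G
  haveI : ∀ g : G, Fintype (fixedBy V g) := fun g => Fintype.ofFinite _
  haveI : ∀ g : G, Fintype (fixedBy (Module.Dual K V) g) := fun g => Fintype.ofFinite _
  haveI := Fintype.ofFinite (MulAction.orbitRel.Quotient G V)
  haveI := Fintype.ofFinite (MulAction.orbitRel.Quotient G (Module.Dual K V))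
  -- count fixed points
  have hfixV : ∀ g : G, fixedBy V g = (LinearMap.ker (ρ g - 1) : Set V) := by
    intro g
    ext v
    show ρ g v = v ↔ _
    simp [LinearMap.mem_ker, LinearMap.sub_apply, sub_eq_zero]
  have hfixD : ∀ g : G, fixedBy (Module.Dual K V) g =
      (LinearMap.ker ((ρ g⁻¹ - 1).dualMap) : Set (Module.Dual K V)) := by
    intro g
    have hdm : (ρ g⁻¹ - 1).dualMap = (ρ g⁻¹).dualMap - 1 := by
      ext w v
      simp [LinearMap.dualMap_apply, LinearMap.sub_apply, map_sub]
    ext w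
    show (ρ g⁻¹).dualMap w = w ↔ _
    simp [hdm, LinearMap.mem_ker, LinearMap.sub_apply, sub_eq_zero]
  have hcard : ∀ g : G,
      Fintype.card (fixedBy (Module.Dual K V) g) = Fintype.card (fixedBy V g⁻¹) := by
    intro g
    have e1 : Fintype.card (fixedBy (Module.Dual K V) g) =
        Nat.card (LinearMap.ker ((ρ g⁻¹ - 1).dualMap)) := by
      rw [← Nat.card_eq_fintype_card]
      exact Nat.card_congr (Equiv.setCongr (hfixD g))
    have e2 : Fintype.card (fixedBy V g⁻¹) =
        Nat.card (LinearMap.ker (ρ g⁻¹ - 1)) := by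
      rw [← Nat.card_eq_fintype_card]
      exact Nat.card_congr (Equiv.setCongr (hfixV g⁻¹))
    have hrk : finrank K (LinearMap.ker ((ρ g⁻¹ - 1).dualMap)) =
        finrank K (LinearMap.ker (ρ g⁻¹ - 1)) := by
      have r1 := LinearMap.finrank_range_add_finrank_ker ((ρ g⁻¹ - 1).dualMap)
      have r2 := LinearMap.finrank_range_add_finrank_ker (ρ g⁻¹ - 1)
      have r3 := LinearMap.finrank_range_dualMap_eq_finrank_range (ρ g⁻¹ - 1)
      have r4 : finrank K (Module.Dual K V) = finrank K V := Subspace.dual_finrank_eq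
      omega
    haveI := Fintype.ofFinite (LinearMap.ker ((ρ g⁻¹ - 1).dualMap))
    haveI := Fintype.ofFinite (LinearMap.ker (ρ g⁻¹ - 1))
    rw [e1, e2, Nat.card_eq_fintype_card, Nat.card_eq_fintype_card,
      card_eq_pow_finrank (K := K) (V := ↥(LinearMap.ker ((ρ g⁻¹ - 1).dualMap))),
      card_eq_pow_finrank (K := K) (V := ↥(LinearMap.ker (ρ g⁻¹ - 1))), hrk]
  -- Burnside on both sides
  have b1 := MulAction.sum_card_fixedBy_eq_card_orbits_mul_card_group G V
  have b2 := MulAction.sum_card_fixedBy_eq_card_orbits_mul_card_group G (Module.Dual K V)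
  have hsum : (∑ g : G, Fintype.card (fixedBy (Module.Dual K V) g)) =
      ∑ g : G, Fintype.card (fixedBy V g) := by
    rw [Fintype.sum_equiv (Equiv.inv G)
      (fun g => Fintype.card (fixedBy (Module.Dual K V) g))
      (fun g => Fintype.card (fixedBy V g)) (fun g => by simp [hcard g])]
  have hG : 0 < Fintype.card G := Fintype.card_pos
  have : Fintype.card (MulAction.orbitRel.Quotient G V) =
      Fintype.card (MulAction.orbitRel.Quotient G (Module.Dual K V)) := by
    have := b1.symm.trans (hsum.symm.trans b2)
    exact Nat.eq_of_mul_eq_mul_right hG this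
  rw [Nat.card_eq_fintype_card, Nat.card_eq_fintype_card, this]
end

section
/- Let V and W be finite-dimensional vector spaces over a field K, X ∈ End(V), Y ∈ End(W). Then the dimension of the space I(X,Y) = {T ∈ Hom(V,W) : T∘X = Y∘T} equals the dimension of I(Y,X) = {S ∈ Hom(W,V) : S∘Y = X∘S}. -/
open LinearMap Module

section Aux

variable {K V W : Type*} [Field K] [AddCommGroup V] [Module K V] [AddCommGroup W] [Module K W]
  [FiniteDimensional K V] [FiniteDimensional K W]

/-- The trace pairing `S ↦ (T ↦ trace (S ∘ T))`. -/
noncomputable def tracePairing (K V W : Type*) [Field K] [AddCommGroup V] [Module K V]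
    [AddCommGroup W] [Module K W] :
    (W →ₗ[K] V) →ₗ[K] Module.Dual K (V →ₗ[K] W) :=
  (LinearMap.llcomp K (V →ₗ[K] W) (V →ₗ[K] V) K (LinearMap.trace K V)).comp
    (LinearMap.llcomp K V W V)

lemma tracePairing_apply (S : W →ₗ[K] V) (T : V →ₗ[K] W) :
    tracePairing K V W S T = LinearMap.trace K V (S ∘ₗ T) := rfl

lemma tracePairing_injective : Function.Injective (tracePairing K V W) := by
  rw [← LinearMap.ker_eq_bot, LinearMap.ker_eq_bot']
  intro S hS
  ext w
  simp only [LinearMap.zero_apply]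
  rw [← Module.forall_dual_apply_eq_zero_iff K (S w)]
  intro f
  have h := congrFun (congrArg DFunLike.coe hS) (dualTensorHom K V W (f ⊗ₜ[K] w))
  rw [tracePairing_apply] at h
  have hcomp : S ∘ₗ dualTensorHom K V W (f ⊗ₜ[K] w) = dualTensorHom K V V (f ⊗ₜ[K] (S w)) := by
    ext v; simp
  rw [hcomp, LinearMap.trace_eq_contract_apply, contractLeft_apply] at h
  simpa using h

lemma rank_intertwiner_le (X : Module.End K V) (Y : Module.End K W) :
    Module.finrank K
        (LinearMap.range (LinearMap.llcomp K W V V X - LinearMap.lcomp K V Y)) ≤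
      Module.finrank K
        (LinearMap.range (LinearMap.llcomp K V W W Y - LinearMap.lcomp K W X)) := by
  set Φ : (V →ₗ[K] W) →ₗ[K] (V →ₗ[K] W) := LinearMap.llcomp K V W W Y - LinearMap.lcomp K W X
  set Ψ : (W →ₗ[K] V) →ₗ[K] (W →ₗ[K] V) := LinearMap.llcomp K W V V X - LinearMap.lcomp K V Y
  have key : (tracePairing K V W) ∘ₗ Ψ = -(Φ.dualMap ∘ₗ tracePairing K V W) := by
    ext S T
    simp only [LinearMap.comp_apply, LinearMap.neg_apply, LinearMap.dualMap_apply,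
      tracePairing_apply, Φ, Ψ, LinearMap.sub_apply, LinearMap.llcomp_apply',
      LinearMap.lcomp_apply', LinearMap.sub_comp, LinearMap.comp_sub, map_sub, neg_sub,
      LinearMap.comp_assoc]
    have h := LinearMap.trace_comp_comm' (S ∘ₗ T) X
    rw [LinearMap.comp_assoc] at h
    rw [h]
  have h1 : Module.finrank K (LinearMap.range Ψ) =
      Module.finrank K (LinearMap.range ((tracePairing K V W) ∘ₗ Ψ)) := by
    rw [LinearMap.range_comp]
    exact ((LinearMap.range Ψ).equivMapOfInjective _ tracePairing_injective).finrank_eq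
  rw [h1, key]
  have h2 : LinearMap.range (-(Φ.dualMap ∘ₗ tracePairing K V W)) ≤ LinearMap.range Φ.dualMap := by
    rintro x ⟨y, rfl⟩
    exact ⟨-(tracePairing K V W y), by simp⟩
  calc Module.finrank K (LinearMap.range (-(Φ.dualMap ∘ₗ tracePairing K V W)))
      ≤ Module.finrank K (LinearMap.range Φ.dualMap) := Submodule.finrank_mono h2
    _ = Module.finrank K (LinearMap.range Φ) :=
        LinearMap.finrank_range_dualMap_eq_finrank_range Φ

end Aux

/-- For finite-dimensional vector spaces `V`, `W` over a field `K` and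
endomorphisms `X ∈ End(V)`, `Y ∈ End(W)`, the space `I(X,Y) = {T : V →ₗ W | T∘X = Y∘T}`
has the same dimension as `I(Y,X) = {S : W →ₗ V | S∘Y = X∘S}`. The intertwiner space is
expressed as the kernel of `T ↦ Y∘T - T∘X`. -/
theorem finrank_intertwiner_symm
    {K V W : Type*} [Field K] [AddCommGroup V] [Module K V] [AddCommGroup W] [Module K W]
    [FiniteDimensional K V] [FiniteDimensional K W]
    (X : Module.End K V) (Y : Module.End K W) :
    Module.finrank K
        (LinearMap.ker (LinearMap.llcomp K V W W Y - LinearMap.lcomp K W X)) =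
      Module.finrank K
        (LinearMap.ker (LinearMap.llcomp K W V V X - LinearMap.lcomp K V Y)) := by
  set Φ : (V →ₗ[K] W) →ₗ[K] (V →ₗ[K] W) := LinearMap.llcomp K V W W Y - LinearMap.lcomp K W X
  set Ψ : (W →ₗ[K] V) →ₗ[K] (W →ₗ[K] V) := LinearMap.llcomp K W V V X - LinearMap.lcomp K V Y
  have hr : Module.finrank K (LinearMap.range Φ) = Module.finrank K (LinearMap.range Ψ) :=
    le_antisymm (rank_intertwiner_le Y X) (rank_intertwiner_le X Y)
  have h1 := Φ.finrank_range_add_finrank_ker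
  have h2 := Ψ.finrank_range_add_finrank_ker
  have hdim : Module.finrank K (V →ₗ[K] W) = Module.finrank K (W →ₗ[K] V) := by
    rw [Module.finrank_linearMap, Module.finrank_linearMap, mul_comm]
  omega
end

section
/- Fix m ∈ ℕ, let n = m(m+1)/2, and define integers c_0,...,c_n by Π_{i=1}^m (1 - X^i) = Σ_{i=0}^n c_i X^i. For every non-empty subset S of {1,...,m} and every integer k ≥ n, p(k,S) = - Σ_{j=k-n}^{k-1} c_{k-j} · p(j,S), where p(j,S) is the number of partitions of j all of whose parts lie in S. -/
/-- `pCount k S` is the number of partitions of `k` all of whose parts lie in `S`. -/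
noncomputable def pCount (k : ℕ) (S : Finset ℕ) : ℕ :=
  Nat.card {P : Nat.Partition k // ∀ i ∈ P.parts, i ∈ S}

/-!
Splitting partitions according to whether they use a part `s` gives
`∏_{i ∈ S} (1 - X^i) · ∑_j p(j,S) X^j = 1`. Multiplying by the remaining factors,
`Δ(X) · ∑_j p(j,S) X^j = ∏_{i ∈ {1,…,m} \ S} (1 - X^i)`, a polynomial of degree
`n - ∑_{i ∈ S} i < n` since `S` is non-empty. Hence the coefficient of `X^k` on the left vanishes
for `k ≥ n`; as `c_0 = 1` and `c_i = 0` for `i > n`, this is the recurrence.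
-/

open Finset Polynomial

theorem PowerSeries.coeff_eq_neg_sum_Ico_of_coeff_mul_eq_zero {R : Type*} [CommRing R]
    (Δ : R[X]) (f : PowerSeries R) {n k : ℕ} (hΔ₀ : Δ.coeff 0 = 1) (hΔ : Δ.natDegree ≤ n)
    (h : coeff k ((Δ : PowerSeries R) * f) = 0) :
    coeff k f = - ∑ j ∈ Ico (k - n) k, Δ.coeff (k - j) * coeff j f := by
  have hsum : ∑ j ∈ range (k + 1), Δ.coeff (k - j) * coeff j f = 0 := by
    rw [← h, PowerSeries.coeff_mul, ← Nat.sum_antidiagonal_swap,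
      Nat.sum_antidiagonal_eq_sum_range_succ_mk]
    simp only [Prod.swap_prod_mk, Polynomial.coeff_coe]
  have hlow : ∑ j ∈ Ico (k - n) (k + 1), Δ.coeff (k - j) * coeff j f =
      ∑ j ∈ range (k + 1), Δ.coeff (k - j) * coeff j f := by
    refine sum_subset (fun j hj => ?_) fun j hj hj' => ?_
    · simp only [mem_Ico, mem_range] at hj ⊢; omega
    · simp only [mem_Ico, mem_range] at hj hj'
      rw [coeff_eq_zero_of_natDegree_lt (by omega), zero_mul]
  rw [← hlow, sum_Ico_succ_top (Nat.sub_le k n), Nat.sub_self, hΔ₀, one_mul] at hsum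
  linear_combination hsum

theorem sum_Icc_one_id (m : ℕ) : ∑ i ∈ Icc 1 m, i = m * (m + 1) / 2 := by
  have h := sum_range_id (m + 1)
  rwa [range_eq_Ico, sum_eq_sum_Ico_succ_bot (Nat.succ_pos m), zero_add, Nat.succ_eq_add_one,
    Ico_add_one_right_eq_Icc, Nat.add_sub_cancel, mul_comm] at h

theorem natDegree_prod_one_sub_X_pow_le {R : Type*} [CommRing R] (T : Finset ℕ) :
    (∏ i ∈ T, (1 - X ^ i : R[X])).natDegree ≤ ∑ i ∈ T, i :=
  (natDegree_prod_le _ _).trans <| sum_le_sum fun i _ =>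
    (natDegree_sub_le _ _).trans (by simpa using natDegree_X_pow_le i)

theorem coeff_zero_prod_one_sub_X_pow {R : Type*} [CommRing R] {T : Finset ℕ} (hT : 0 ∉ T) :
    (∏ i ∈ T, (1 - X ^ i : R[X])).coeff 0 = 1 := by
  rw [coeff_zero_prod]
  refine prod_eq_one fun i hi => ?_
  have hi0 : 0 ≠ i := by rintro rfl; exact hT hi
  simp [coeff_X_pow, hi0]

def Nat.Partition.eraseEquiv {k s : ℕ} {S : Finset ℕ} (hs : 0 < s) (hsS : s ∈ S) (hsk : s ≤ k) :
    {P : Nat.Partition k // (∀ i ∈ P.parts, i ∈ S) ∧ s ∈ P.parts} ≃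
      {P : Nat.Partition (k - s) // ∀ i ∈ P.parts, i ∈ S} where
  toFun P :=
    ⟨⟨P.1.parts.erase s, fun hi => P.1.parts_pos (Multiset.mem_of_mem_erase hi), by
        have h := Multiset.sum_erase P.2.2
        rw [P.1.parts_sum] at h
        omega⟩,
      fun i hi => P.2.1 i (Multiset.mem_of_mem_erase hi)⟩
  invFun P :=
    ⟨⟨s ::ₘ P.1.parts,
        fun hi => (Multiset.mem_cons.1 hi).elim (· ▸ hs) P.1.parts_pos,
        by rw [Multiset.sum_cons, P.1.parts_sum]; omega⟩,
      fun i hi => (Multiset.mem_cons.1 hi).elim (· ▸ hsS) (P.2 i),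
      Multiset.mem_cons_self _ _⟩
  left_inv P := Subtype.ext <| Nat.Partition.ext <| Multiset.cons_erase P.2.2
  right_inv P := Subtype.ext <| Nat.Partition.ext <| Multiset.erase_cons_head _ _

theorem pCount_empty (k : ℕ) : pCount k ∅ = if k = 0 then 1 else 0 := by
  rcases Nat.eq_zero_or_pos k with rfl | hk
  · have : Unique {P : Nat.Partition 0 // ∀ i ∈ P.parts, i ∈ (∅ : Finset ℕ)} :=
      ⟨⟨⟨default, by simp⟩⟩, fun _ => Subtype.ext (Subsingleton.elim _ _)⟩
    exact Nat.card_unique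
  · rw [if_neg hk.ne', pCount, Nat.card_eq_zero]
    refine .inl ⟨fun ⟨P, hP⟩ => ?_⟩
    have hne : P.parts ≠ 0 := fun h => by
      rw [← P.parts_sum, h, Multiset.sum_zero] at hk
      exact hk.false
    obtain ⟨a, ha⟩ := Multiset.exists_mem_of_ne_zero hne
    exact absurd (hP a ha) (notMem_empty a)

theorem pCount_insert {s : ℕ} (hs : 0 < s) {S : Finset ℕ} (hsS : s ∉ S) (k : ℕ) :
    pCount k (insert s S) =
      pCount k S + if s ≤ k then pCount (k - s) (insert s S) else 0 := by
  classical
  have hsplit : pCount k (insert s S) =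
      Nat.card {P : Nat.Partition k // (∀ i ∈ P.parts, i ∈ insert s S) ∧ s ∉ P.parts} +
        Nat.card {P : Nat.Partition k // (∀ i ∈ P.parts, i ∈ insert s S) ∧ s ∈ P.parts} := by
    simp only [pCount, Nat.card_eq_fintype_card, Fintype.card_subtype, ← filter_filter]
    rw [add_comm, card_filter_add_card_filter_not]
  have hwithout :
      {P : Nat.Partition k // (∀ i ∈ P.parts, i ∈ insert s S) ∧ s ∉ P.parts} ≃
        {P : Nat.Partition k // ∀ i ∈ P.parts, i ∈ S} :=
    Equiv.subtypeEquivRight fun P =>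
      ⟨fun ⟨h, hs⟩ i hi => (mem_insert.1 (h i hi)).resolve_left (by rintro rfl; exact hs hi),
        fun h => ⟨fun i hi => mem_insert_of_mem (h i hi), fun hc => hsS (h s hc)⟩⟩
  rw [hsplit, pCount, Nat.card_congr hwithout]
  split_ifs with hsk
  · exact congrArg _ (Nat.card_congr (Nat.Partition.eraseEquiv hs (mem_insert_self s S) hsk))
  · refine congrArg _ (Nat.card_eq_zero.2 (.inl ⟨fun ⟨P, _, hP⟩ => hsk ?_⟩))
    exact (Multiset.le_sum_of_mem hP).trans P.parts_sum.le

theorem prod_one_sub_X_pow_mul_pCount {S : Finset ℕ} (hS : ∀ i ∈ S, 0 < i) :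
    ((∏ i ∈ S, (1 - X ^ i) : ℤ[X]) : PowerSeries ℤ) * PowerSeries.mk (fun j => (pCount j S : ℤ)) =
      1 := by
  classical
  induction S using Finset.induction_on with
  | empty =>
    ext n
    simp [pCount_empty, PowerSeries.coeff_one]
  | @insert s S hsS ih =>
    have hs : 0 < s := hS s (mem_insert_self s S)
    have hstep : (1 - PowerSeries.X ^ s) * PowerSeries.mk (fun j => (pCount j (insert s S) : ℤ)) =
        PowerSeries.mk (fun j => (pCount j S : ℤ)) := by
      ext k
      rw [sub_mul, one_mul, map_sub, PowerSeries.coeff_X_pow_mul']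
      simp only [PowerSeries.coeff_mk, pCount_insert hs hsS k]
      split_ifs <;> push_cast <;> ring
    rw [prod_insert hsS, Polynomial.coe_mul, Polynomial.coe_sub, Polynomial.coe_one,
      Polynomial.coe_pow, Polynomial.coe_X, mul_right_comm, hstep,
      mul_comm, ih fun i hi => hS i (mem_insert_of_mem hi)]

/-- Fix `m`, let `n = m(m+1)/2` and let `c_i` be the coefficients of
`Δ(X) = ∏_{i=1}^m (1 - X^i)`. For every non-empty `S ⊆ {1,...,m}` and every `k ≥ n`,
`p(k,S) = - ∑_{j=k-n}^{k-1} c_{k-j} p(j,S)`. -/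
theorem pCount_recurrence (m : ℕ) (S : Finset ℕ) (hS : S.Nonempty)
    (hSm : S ⊆ Finset.Icc 1 m) (k : ℕ) (hk : m * (m + 1) / 2 ≤ k) :
    (pCount k S : ℤ) =
      - ∑ j ∈ Finset.Ico (k - m * (m + 1) / 2) k,
          (∏ i ∈ Finset.Icc 1 m, (1 - Polynomial.X ^ i : Polynomial ℤ)).coeff (k - j) *
            (pCount j S : ℤ) := by
  have hsplit : (∏ i ∈ Icc 1 m \ S, (1 - X ^ i : ℤ[X])) * ∏ i ∈ S, (1 - X ^ i) =
      ∏ i ∈ Icc 1 m, (1 - X ^ i) :=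
    prod_sdiff hSm
  have hdeg : (∏ i ∈ Icc 1 m \ S, (1 - X ^ i : ℤ[X])).natDegree < k := by
    obtain ⟨s, hs⟩ := hS
    calc _ ≤ ∑ i ∈ Icc 1 m \ S, i := natDegree_prod_one_sub_X_pow_le _
      _ < ∑ i ∈ Icc 1 m, i :=
        sum_lt_sum_of_subset sdiff_subset (hSm hs) (fun h => (mem_sdiff.1 h).2 hs)
          (mem_Icc.1 (hSm hs)).1 fun _ _ _ => Nat.zero_le _
      _ = m * (m + 1) / 2 := sum_Icc_one_id m
      _ ≤ k := hk
  have hcoeff : PowerSeries.coeff k (((∏ i ∈ Icc 1 m, (1 - X ^ i) : ℤ[X]) : PowerSeries ℤ) *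
      PowerSeries.mk fun j => (pCount j S : ℤ)) = 0 := by
    rw [← hsplit, Polynomial.coe_mul, mul_assoc,
      prod_one_sub_X_pow_mul_pCount fun i hi => (mem_Icc.1 (hSm hi)).1, mul_one, coeff_coe,
      coeff_eq_zero_of_natDegree_lt hdeg]
  simpa only [PowerSeries.coeff_mk] using
    PowerSeries.coeff_eq_neg_sum_Ico_of_coeff_mul_eq_zero _ _
      (coeff_zero_prod_one_sub_X_pow (by simp))
      ((natDegree_prod_one_sub_X_pow_le _).trans (sum_Icc_one_id m).le) hcoeff
end

section
/- Fix m ∈ ℕ, let n = m(m+1)/2, define c_0,...,c_n by Π_{i=1}^m(1-X^i) = Σ_i c_i X^i, and set d_j = Σ_{i=0}^{n-j} c_i for j = 1,...,n. Then for every non-empty subset S of {1,...,m}: Σ_{j=1}^n d_j · p(j,S) equals 1 if S = {1,...,m}, and equals 0 otherwise. -/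
/-!
Put `F = ∏_{t=1}^m (1 - Xᵗ)`. The generating function `∑ⱼ p(j,S) Xʲ` is `∏_{s ∈ S} (1 - Xˢ)⁻¹`,
so multiplying it by `F` leaves the polynomial `H = ∏_{t ∈ [1,m] \ S} (1 - Xᵗ)` of degree at
most `n`. Since `d_j p(j,S)` collects exactly the terms `c_i p(j,S)` with `i + j ≤ n`, the sum
`∑_{j=0}^n d_j p(j,S)` is the sum of the coefficients of `H`, i.e. `H(1)`, which is `1` if
`S = [1,m]` and `0` otherwise. The extra term `j = 0` vanishes because `d_0 = F(1) = 0`.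
-/

open PowerSeries Finset
open scoped Polynomial

theorem PowerSeries.sum_range_coeff_mul {R : Type*} [CommSemiring R] (A B : R⟦X⟧) (N : ℕ) :
    ∑ k ∈ range (N + 1), coeff k (A * B) =
      ∑ j ∈ range (N + 1), (∑ i ∈ range (N - j + 1), coeff i A) * coeff j B := by
  calc ∑ k ∈ range (N + 1), coeff k (A * B)
      = ∑ k ∈ range (N + 1), ∑ j ∈ range (k + 1), coeff j B * coeff (k - j) A := by
        simp_rw [mul_comm A B, coeff_mul, Nat.sum_antidiagonal_eq_sum_range_succ
          (fun j i => coeff j B * coeff i A)]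
    _ = ∑ j ∈ range (N + 1), ∑ i ∈ range (N + 1 - j), coeff j B * coeff i A :=
        sum_range_diag_flip _ (fun j i => coeff j B * coeff i A)
    _ = _ := by
        refine sum_congr rfl fun j hj => ?_
        rw [sum_mul, Nat.sub_add_comm (mem_range_succ_iff.mp hj)]
        exact sum_congr rfl fun _ _ => mul_comm _ _

theorem Polynomial.sum_range_coeff_eq_eval_one {R : Type*} [Semiring R] {p : R[X]} {N : ℕ}
    (h : p.natDegree < N) :
    ∑ i ∈ range N, p.coeff i = p.eval 1 := by
  simp [eval_eq_sum_range' h]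

section Ring

variable {R : Type*} [CommRing R]

namespace Polynomial

theorem natDegree_prod_one_sub_X_pow_le (T : Finset ℕ) :
    (∏ t ∈ T, (1 - X ^ t : R[X])).natDegree ≤ ∑ t ∈ T, t :=
  (natDegree_prod_le _ _).trans <| sum_le_sum fun t _ =>
    (natDegree_sub_le _ _).trans (by simpa using natDegree_X_pow_le t)

theorem eval_one_prod_one_sub_X_pow (T : Finset ℕ) :
    (∏ t ∈ T, (1 - X ^ t : R[X])).eval 1 = 0 ^ #T := by
  simp [eval_prod]

theorem coe_prod_one_sub_X_pow (T : Finset ℕ) :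
    ((∏ t ∈ T, (1 - X ^ t : R[X]) : R[X]) : R⟦X⟧) = ∏ t ∈ T, (1 - PowerSeries.X ^ t) := by
  rw [← coeToPowerSeries.ringHom_apply, map_prod]
  simp [coeToPowerSeries.ringHom_apply]

end Polynomial

theorem pCount_eq_card_restricted (k : ℕ) (S : Finset ℕ) :
    pCount k S = #(Nat.Partition.restricted k (· ∈ S)) := by
  rw [pCount, Nat.card_eq_fintype_card, Fintype.card_subtype, Nat.Partition.restricted]

open PowerSeries.WithPiTopology in
theorem prod_one_sub_X_pow_mul_mk_pCount {S : Finset ℕ} (hS : 0 ∉ S) :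
    (∏ s ∈ S, (1 - X ^ s : R⟦X⟧)) * PowerSeries.mk (fun j => (pCount j S : R)) = 1 := by
  let _ : TopologicalSpace R := ⊥
  have _ : DiscreteTopology R := ⟨rfl⟩
  -- the library's product formula indexes the factor of the part `i + 1` by `i`
  have hfactor : ∏ s ∈ S, (1 - X ^ s : R⟦X⟧) =
      ∏' i, if i + 1 ∈ S then 1 - X ^ (i + 1) else 1 := by
    rw [(add_left_injective 1).tprod_eq (f := fun s => if s ∈ S then (1 - X ^ s : R⟦X⟧) else 1),
      tprod_eq_prod (s := S), prod_ite_mem, inter_self]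
    · exact fun s hs => if_neg hs
    · intro s hs
      have : s ≠ 0 := by rintro rfl; simp [hS] at hs
      exact ⟨s - 1, Nat.sub_add_cancel (Nat.one_le_iff_ne_zero.mpr this)⟩
  have hgeom (i : ℕ) : (1 - X ^ (i + 1) : R⟦X⟧) * ∑' j, (X ^ (i + 1)) ^ j = 1 :=
    one_sub_mul_tsum_pow_of_constantCoeff_eq_zero (by simp)
  simp_rw [pCount_eq_card_restricted]
  rw [Nat.Partition.powerSeriesMk_card_restricted_eq_tprod, hfactor,
    ← Multipliable.tprod_mul _ (Nat.Partition.multipliable_powerSeriesMk_card_restricted R _)]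
  · simp_rw [ite_mul_ite, one_mul, pow_mul, hgeom, ite_self, tprod_one]
  · refine multipliable_of_hasFiniteMulSupport
      ((S.finite_toSet.preimage (add_left_injective 1).injOn).subset fun i hi => ?_)
    by_contra h
    exact hi (if_neg h)

theorem coe_prod_one_sub_X_pow_mul_mk_pCount {S T : Finset ℕ} (hST : S ⊆ T) (hT : 0 ∉ T) :
    ((∏ t ∈ T, (1 - Polynomial.X ^ t : R[X]) : R[X]) : R⟦X⟧) *
        PowerSeries.mk (fun j => (pCount j S : R)) =
      ((∏ t ∈ T \ S, (1 - Polynomial.X ^ t : R[X]) : R[X]) : R⟦X⟧) := by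
  rw [Polynomial.coe_prod_one_sub_X_pow, Polynomial.coe_prod_one_sub_X_pow, ← prod_sdiff hST,
    mul_assoc, prod_one_sub_X_pow_mul_mk_pCount (fun h => hT (hST h)), mul_one]

theorem sum_range_sum_coeff_mul_pCount {S T : Finset ℕ} {N : ℕ} (hST : S ⊆ T) (hT : 0 ∉ T)
    (hN : ∑ t ∈ T, t ≤ N) :
    ∑ j ∈ range (N + 1), (∑ i ∈ range (N - j + 1),
        (∏ t ∈ T, (1 - Polynomial.X ^ t : R[X])).coeff i) * (pCount j S : R) = 0 ^ #(T \ S) := by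
  have hdeg : (∏ t ∈ T \ S, (1 - Polynomial.X ^ t : R[X])).natDegree < N + 1 :=
    Nat.lt_succ_of_le <| (Polynomial.natDegree_prod_one_sub_X_pow_le _).trans <|
      (sum_le_sum_of_subset sdiff_subset).trans hN
  rw [← Polynomial.eval_one_prod_one_sub_X_pow, ← Polynomial.sum_range_coeff_eq_eval_one hdeg]
  simp_rw [← Polynomial.coeff_coe, ← coe_prod_one_sub_X_pow_mul_mk_pCount hST hT,
    sum_range_coeff_mul, coeff_mk]

end Ring

/-- Fix `m`, let `n = m(m+1)/2`, let `c_i` be the coefficients of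
`∏_{i=1}^m (1 - Xⁱ)` and set `d_j = ∑_{i=0}^{n-j} c_i`. For every non-empty subset
`S ⊆ {1,...,m}`: `∑_{j=1}^n d_j p(j,S)` equals `1` if `S = {1,...,m}` and `0` otherwise. -/
theorem pCount_d_sum (m : ℕ) (S : Finset ℕ) (hS : S.Nonempty)
    (hSm : S ⊆ Finset.Icc 1 m) :
    (∑ j ∈ Finset.Icc 1 (m * (m + 1) / 2),
        (∑ i ∈ Finset.range (m * (m + 1) / 2 - j + 1),
            (∏ t ∈ Finset.Icc 1 m, (1 - Polynomial.X ^ t : Polynomial ℤ)).coeff i) *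
          (pCount j S : ℤ)) =
      if S = Finset.Icc 1 m then 1 else 0 := by
  set n := m * (m + 1) / 2
  have hn : ∑ t ∈ Icc 1 m, t ≤ n :=
    calc ∑ t ∈ Icc 1 m, t ≤ ∑ t ∈ range (m + 1), t :=
          sum_le_sum_of_subset fun t ht => by simp at ht ⊢; omega
      _ = n := by rw [sum_range_id, Nat.add_sub_cancel, mul_comm]
  have hsum := sum_range_sum_coeff_mul_pCount (R := ℤ) hSm (by simp) hn
  have hd₀ : ∑ i ∈ range (n + 1), (∏ t ∈ Icc 1 m, (1 - Polynomial.X ^ t : ℤ[X])).coeff i = 0 := by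
    obtain ⟨s, hs⟩ := hS
    rw [Polynomial.sum_range_coeff_eq_eval_one (Nat.lt_succ_of_le <|
        (Polynomial.natDegree_prod_one_sub_X_pow_le _).trans hn),
      Polynomial.eval_one_prod_one_sub_X_pow, zero_pow (Nonempty.card_ne_zero ⟨s, hSm hs⟩)]
  rw [Nat.range_succ_eq_Icc_zero, ← insert_Icc_add_one_left_eq_Icc n.zero_le,
    sum_insert (by simp), Nat.sub_zero, hd₀, zero_mul, zero_add, Nat.zero_add] at hsum
  rw [hsum]
  by_cases h : S = Icc 1 m
  · simp [h]
  · rw [if_neg h, zero_pow (sdiff_nonempty.mpr fun h' => h (hSm.antisymm h')).card_ne_zero]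
end
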